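/- For Model 1 in dimension d = 1 with i.i.d. N(0,1) weights: given ε > 0, there is a constant c(ε) > 0 so that for all N sufficiently large, P(Z_{2^N} ≤ (μ − ε)2^N) ≥ (1/2)·e^{−c(ε)2^{2N}/N}. -/

import Mathlib

/-!
Model 1 (directed last passage percolation, d = 1).  Edges are indexed by
`(x, m, b) : ℤ × ℕ × Bool`, representing the directed edge from the vertex
`(x, m)` to `(x + (if b then 1 else -1), m + 1)`.
-/

open MeasureTheory ProbabilityTheory Filter

namespace Stmt13

/-- Position of a directed path after `k` steps, starting at `x`,
with step signs `s`. -/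
def pos (x : ℤ) (s : ℕ → Bool) : ℕ → ℤ
  | 0 => x
  | k + 1 => pos x s k + (if s k then 1 else -1)

/-- Value `V(γ)` of the directed path starting at `(x, m)`, taking `n` steps
according to `s`, in the edge-weight realization `Y`. -/
noncomputable def pathVal (Y : ℤ × ℕ × Bool → ℝ) (x : ℤ) (m : ℕ) (s : ℕ → Bool) (n : ℕ) : ℝ :=
  ∑ k ∈ Finset.range n, Y (pos x s k, m + k, s k)

/-- Last passage time `Z_n` from the origin to level `n`. -/
noncomputable def Z (Y : ℤ × ℕ × Bool → ℝ) (n : ℕ) : ℝ :=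
  ⨆ s : ℕ → Bool, pathVal Y 0 0 s n

end Stmt13

open Stmt13

open Finset
open scoped ENNReal

/-!
Tilt the environment. Adding the deterministic weight `a / (k + 1)` to every edge `(x, k, b)` of
the light cone `|x| ≤ k < n` raises the value of every directed path from the origin, hence `Z_n`,
by exactly `a H_n` (`H_n` the harmonic number): such a path uses one edge per level, all of them in
the cone. With `a H_n = 2εn` the tilt maps the event `Z_n ≤ (μ + ε) n`, of probability at least
`3/4` for large `n` by the law of large numbers, into `Z_n ≤ (μ - ε) n`. By Cameron–Martin the
shifted Gaussian vector has density `exp (⟨w, y⟩ - |w|² / 2)`, which is at least `exp (-|w|² / 2)`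
on the half-space `⟨w, y⟩ ≥ 0` of probability at least `1/2`, and here
`|w|² ≤ 4 a² H_n = 16 ε² n² / H_n`. For `n = 2^N`, `H_n ≥ N / 2` turns this into `exp (-c 4^N / N)`.
-/

lemma gaussianReal_eq_withDensity_exp (c : ℝ) :
    gaussianReal c 1 =
      (gaussianReal 0 1).withDensity fun x => ENNReal.ofReal (Real.exp (c * x - c ^ 2 / 2)) := by
  rw [gaussianReal_of_var_ne_zero c one_ne_zero, gaussianReal_of_var_ne_zero 0 one_ne_zero,
    ← withDensity_mul _ (measurable_gaussianPDF 0 1) (by fun_prop)]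
  congr 1
  funext x
  simp only [Pi.mul_apply, gaussianPDF, gaussianPDFReal, NNReal.coe_one, mul_one, sub_zero]
  rw [← ENNReal.ofReal_mul (by positivity), mul_assoc, ← Real.exp_add]
  congr 3
  ring

lemma pi_eq_withDensity_prod {ι E : Type*} [Fintype ι] [MeasurableSpace E] {μ : Measure E}
    [IsProbabilityMeasure μ] {ν : ι → Measure E} [∀ i, SigmaFinite (ν i)] {f : ι → E → ℝ≥0∞}
    (hf : ∀ i, Measurable (f i)) (hν : ∀ i, ν i = μ.withDensity (f i)) :
    Measure.pi ν = (Measure.pi fun _ => μ).withDensity fun x => ∏ i, f i (x i) := by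
  classical
  refine Measure.pi_eq fun s hs => ?_
  have hcoord : iIndepFun (fun i (x : ι → E) => (s i).indicator (f i) (x i))
      (Measure.pi fun _ => μ) :=
    iIndepFun_pi fun i => ((hf i).indicator (hs i)).aemeasurable
  rw [withDensity_apply _ (.univ_pi hs), ← lintegral_indicator (.univ_pi hs)]
  have hind : (Set.univ.pi s).indicator (fun x => ∏ i, f i (x i))
      = fun x => ∏ i ∈ univ, (s i).indicator (f i) (x i) := by
    ext x
    simp only [Set.indicator, prod_ite_zero, Set.mem_pi, Set.mem_univ, mem_univ, true_implies]
  rw [hind, lintegral_prod_eq_prod_lintegral_of_indepFun _ _ hcoord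
    fun i => ((hf i).indicator (hs i)).comp (measurable_pi_apply i)]
  refine prod_congr rfl fun i _ => ?_
  rw [hν i, withDensity_apply _ (hs i), ← lintegral_indicator (hs i),
    (measurePreserving_eval (fun _ => μ) i).lintegral_comp ((hf i).indicator (hs i))]

section StandardGaussian

variable {ι : Type*} [Fintype ι]

lemma map_add_pi_gaussianReal (w : ι → ℝ) :
    (Measure.pi fun _ : ι => gaussianReal 0 1).map (· + w) =
      (Measure.pi fun _ : ι => gaussianReal 0 1).withDensity
        fun y => ENNReal.ofReal (Real.exp (∑ i, (w i * y i - w i ^ 2 / 2))) := by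
  have hshift : (Measure.pi fun _ : ι => gaussianReal 0 1).map (· + w) =
      Measure.pi fun i => gaussianReal (w i) 1 := by
    rw [show (· + w) = fun (y : ι → ℝ) i => y i + w i from rfl,
      Measure.pi_map_pi fun i => (measurable_add_const (w i)).aemeasurable]
    simp_rw [gaussianReal_map_add_const, zero_add]
  rw [hshift, pi_eq_withDensity_prod (by fun_prop) fun i => gaussianReal_eq_withDensity_exp (w i)]
  simp_rw [← ENNReal.ofReal_prod_of_nonneg fun i _ => (Real.exp_pos _).le, Real.exp_sum]

lemma pi_gaussianReal_sum_mul_neg_le_half (w : ι → ℝ) :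
    (Measure.pi fun _ : ι => gaussianReal 0 1).real {y | ∑ i, w i * y i < 0} ≤ 1 / 2 := by
  set π := Measure.pi fun _ : ι => gaussianReal 0 1
  have hneg : π.map (fun y => -y) = π := by
    rw [show (fun y : ι → ℝ => -y) = fun y i => -y i from rfl,
      Measure.pi_map_pi fun i => measurable_neg.aemeasurable]
    simp_rw [gaussianReal_map_neg, neg_zero]
    rfl
  have hmeas : Measurable fun y : ι → ℝ => ∑ i, w i * y i := by fun_prop
  have hsymm : π.real {y | ∑ i, w i * y i < 0} = π.real {y | 0 < ∑ i, w i * y i} := by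
    conv_lhs => rw [← hneg]
    rw [map_measureReal_apply measurable_neg (measurableSet_lt hmeas measurable_const)]
    congr 1
    ext y
    simp [sum_neg_distrib]
  have hdisj : Disjoint {y : ι → ℝ | ∑ i, w i * y i < 0} {y | 0 < ∑ i, w i * y i} :=
    Set.disjoint_left.2 fun y h1 h2 => (lt_asymm h1.out h2.out).elim
  have htotal : π.real ({y | ∑ i, w i * y i < 0} ∪ {y | 0 < ∑ i, w i * y i}) ≤ 1 :=
    measureReal_le_one
  rw [measureReal_union hdisj (measurableSet_lt measurable_const hmeas), ← hsymm] at htotal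
  linarith

theorem exp_mul_sub_half_le_pi_gaussianReal_preimage_add (w : ι → ℝ) {B : Set (ι → ℝ)}
    (hB : MeasurableSet B) :
    Real.exp (-(∑ i, w i ^ 2) / 2) * ((Measure.pi fun _ : ι => gaussianReal 0 1).real B - 1 / 2)
      ≤ (Measure.pi fun _ : ι => gaussianReal 0 1).real ((· + w) ⁻¹' B) := by
  set π := Measure.pi fun _ : ι => gaussianReal 0 1
  set G := {y : ι → ℝ | 0 ≤ ∑ i, w i * y i}
  have hG : MeasurableSet G := measurableSet_le measurable_const (by fun_prop)
  have htilt : ENNReal.ofReal (Real.exp (-(∑ i, w i ^ 2) / 2)) * π (B ∩ G)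
      ≤ π ((· + w) ⁻¹' B) := by
    rw [← Measure.map_apply (measurable_add_const w) hB, map_add_pi_gaussianReal,
      withDensity_apply _ hB, ← setLIntegral_const]
    refine (lintegral_mono_set (Set.inter_subset_left (t := G))).trans' ?_
    refine setLIntegral_mono' (hB.inter hG) fun y hy => ENNReal.ofReal_le_ofReal ?_
    gcongr
    rw [sum_sub_distrib, ← sum_div]
    linarith [hy.2.out]
  have hcover : π.real B ≤ π.real (B ∩ G) + π.real Gᶜ :=
    (measureReal_mono fun y hy => by by_cases h : y ∈ G <;> simp [h, hy]).trans
      (measureReal_union_le _ _)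
  have hhalf : π.real Gᶜ ≤ 1 / 2 := by
    have : Gᶜ = {y | ∑ i, w i * y i < 0} := by ext y; simp [G]
    exact this ▸ pi_gaussianReal_sum_mul_neg_le_half w
  have htilt' := ENNReal.toReal_mono (measure_ne_top _ _) htilt
  rw [ENNReal.toReal_mul, ENNReal.toReal_ofReal (Real.exp_pos _).le, ← measureReal_def,
    ← measureReal_def] at htilt'
  nlinarith [Real.exp_pos (-(∑ i, w i ^ 2) / 2)]

end StandardGaussian

lemma map_restrict_eq_pi {Ω κ β : Type*} [MeasurableSpace Ω] [MeasurableSpace β]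
    {P : Measure Ω} {X : κ → Ω → β} (hmeas : ∀ e, Measurable (X e)) (hindep : iIndepFun X P)
    {ν : Measure β} (hdist : ∀ e, P.map (X e) = ν) (S : Finset κ) :
    P.map (fun ω (i : S) => X i ω) = Measure.pi fun _ : S => ν := by
  have hindepS : iIndepFun (fun i : S => X i) P := hindep.precomp Subtype.val_injective
  rw [hindepS.map_fun_eq_pi_map fun i : S => (hmeas i).aemeasurable]
  simp only [hdist]

lemma eventually_le_measureReal_le_add_mul {Ω : Type*} [MeasurableSpace Ω] {P : Measure Ω}
    [IsProbabilityMeasure P] {W : ℕ → Ω → ℝ} (hW : ∀ n, Measurable (W n)) {μ : ℝ}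
    (hμ : ∀ᵐ ω ∂P, Tendsto (fun n : ℕ => W n ω / n) atTop (nhds μ)) {ε : ℝ} (hε : 0 < ε)
    {p : ℝ} (hp : p < 1) : ∀ᶠ n : ℕ in atTop, p ≤ P.real {ω | W n ω ≤ (μ + ε) * n} := by
  have hconv := tendstoInMeasure_iff_measureReal_dist.1
    (tendstoInMeasure_of_tendsto_ae (fun n => ((hW n).div_const _).aestronglyMeasurable) hμ) ε hε
  filter_upwards [hconv.eventually (gt_mem_nhds (sub_pos.2 hp)), eventually_gt_atTop 0]
    with n hsmall hn
  have hcompl : {ω | W n ω ≤ (μ + ε) * n}ᶜ ⊆ {ω | ε ≤ dist (W n ω / n) μ} := by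
    intro ω hω
    have hlt : (μ + ε) * n < W n ω := not_le.1 hω
    show ε ≤ dist (W n ω / n) μ
    rw [Real.dist_eq, le_abs, le_sub_iff_add_le, le_div_iff₀ (by positivity)]
    exact Or.inl (by linarith)
  have hmeasSet : MeasurableSet {ω | W n ω ≤ (μ + ε) * n} :=
    measurableSet_le (hW n) measurable_const
  linarith [measureReal_mono hcompl (μ := P), measureReal_add_measureReal_compl (μ := P) hmeasSet,
    probReal_univ (μ := P)]

lemma half_le_harmonic_two_pow (N : ℕ) : (N : ℝ) / 2 ≤ harmonic (2 ^ N) :=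
  calc (N : ℝ) / 2 ≤ N * Real.log 2 := by
        have := Real.log_two_gt_d9
        nlinarith [(N.cast_nonneg : (0 : ℝ) ≤ N)]
    _ = Real.log (2 ^ N) := by rw [Real.log_pow]
    _ ≤ Real.log ((2 ^ N + 1 : ℕ) : ℝ) := Real.log_le_log (by positivity) (by push_cast; linarith)
    _ ≤ harmonic (2 ^ N) := log_add_one_le_harmonic _

lemma half_mul_exp_le_quarter_mul_exp (ε : ℝ) {N : ℕ} (hN : 1 ≤ N) {H : ℝ}
    (hH : (N : ℝ) / 2 ≤ H) :
    1 / 2 * Real.exp (-((16 * ε ^ 2 + 1) * 2 ^ (2 * N)) / N)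
      ≤ 1 / 4 * Real.exp (-(2 * (2 * ε * 2 ^ N) ^ 2 / H)) := by
  have hN' : (1 : ℝ) ≤ N := by exact_mod_cast hN
  set x : ℝ := (2 : ℝ) ^ (2 * N) / N
  have hx : 1 ≤ x := by
    rw [le_div_iff₀ (by linarith), one_mul]
    exact_mod_cast (N.lt_two_pow_self.trans_le (Nat.pow_le_pow_right two_pos (by omega))).le
  have hcost : 2 * (2 * ε * 2 ^ N) ^ 2 / H ≤ 16 * ε ^ 2 * x := by
    rw [div_le_iff₀ (by linarith)]
    calc 2 * (2 * ε * 2 ^ N) ^ 2 = 16 * ε ^ 2 * x * (N / 2) := by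
          simp only [x, pow_mul']
          field_simp
          ring
      _ ≤ 16 * ε ^ 2 * x * H := by gcongr
  have hhalf : Real.exp (-x) ≤ 1 / 2 :=
    (Real.exp_le_exp.2 (neg_le_neg hx)).trans <| by
      rw [Real.exp_neg, inv_le_comm₀ (Real.exp_pos 1) (by norm_num)]
      linarith [Real.exp_one_gt_two]
  calc 1 / 2 * Real.exp (-((16 * ε ^ 2 + 1) * 2 ^ (2 * N)) / N)
      = 1 / 2 * (Real.exp (-(16 * ε ^ 2 * x)) * Real.exp (-x)) := by
        rw [← Real.exp_add]
        congr 2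
        ring
    _ ≤ 1 / 2 * (Real.exp (-(2 * (2 * ε * 2 ^ N) ^ 2 / H)) * (1 / 2)) := by gcongr
    _ = 1 / 4 * Real.exp (-(2 * (2 * ε * 2 ^ N) ^ 2 / H)) := by ring

namespace Stmt13

lemma natAbs_sub_pos_le (x : ℤ) (s : ℕ → Bool) (k : ℕ) : (pos x s k - x).natAbs ≤ k := by
  induction k with
  | zero => simp [pos]
  | succ k ih =>
    simp only [pos]
    split <;> omega

lemma pos_congr {s s' : ℕ → Bool} {n : ℕ} (h : ∀ k < n, s k = s' k) (x : ℤ) :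
    ∀ k ≤ n, pos x s k = pos x s' k := by
  intro k hk
  induction k with
  | zero => rfl
  | succ k ih => simp only [pos, ih (by omega), h k (by omega)]

lemma pathVal_congr (Y : ℤ × ℕ × Bool → ℝ) (x : ℤ) (m : ℕ) {s s' : ℕ → Bool} {n : ℕ}
    (h : ∀ k < n, s k = s' k) : pathVal Y x m s n = pathVal Y x m s' n :=
  sum_congr rfl fun k hk => by
    rw [mem_range] at hk
    rw [pos_congr h x k hk.le, h k hk]

def extendSigns {n : ℕ} (t : Fin n → Bool) : ℕ → Bool :=
  fun k => if h : k < n then t ⟨k, h⟩ else false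

lemma range_pathVal_eq_range_extendSigns (Y : ℤ × ℕ × Bool → ℝ) (x : ℤ) (m n : ℕ) :
    Set.range (fun s => pathVal Y x m s n) =
      Set.range fun t : Fin n → Bool => pathVal Y x m (extendSigns t) n := by
  have hrestrict : Function.Surjective fun (s : ℕ → Bool) (i : Fin n) => s i :=
    fun t => ⟨extendSigns t, by simp [extendSigns]⟩
  rw [← hrestrict.range_comp]
  congr! 2 with s
  exact pathVal_congr Y x m fun k hk => by simp [extendSigns, hk]

lemma Z_eq_iSup_extendSigns (Y : ℤ × ℕ × Bool → ℝ) (n : ℕ) :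
    Z Y n = ⨆ t : Fin n → Bool, pathVal Y 0 0 (extendSigns t) n := by
  rw [Z, iSup, range_pathVal_eq_range_extendSigns, ← iSup]

lemma bddAbove_range_pathVal (Y : ℤ × ℕ × Bool → ℝ) (n : ℕ) :
    BddAbove (Set.range fun s => pathVal Y 0 0 s n) := by
  rw [range_pathVal_eq_range_extendSigns]
  exact (Set.finite_range _).bddAbove

lemma measurable_Z {α : Type*} [MeasurableSpace α] {Y : α → ℤ × ℕ × Bool → ℝ}
    (hY : ∀ e, Measurable fun a => Y a e) (n : ℕ) : Measurable fun a => Z (Y a) n := by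
  simp_rw [Z_eq_iSup_extendSigns]
  exact Measurable.iSup fun t => Finset.measurable_sum _ fun k _ => hY _

noncomputable def cone (n : ℕ) : Finset (ℤ × ℕ × Bool) :=
  {e ∈ Icc (-(n : ℤ)) n ×ˢ range n ×ˢ univ | e.1.natAbs ≤ e.2.1}

lemma mem_cone {n : ℕ} {e : ℤ × ℕ × Bool} : e ∈ cone n ↔ e.2.1 < n ∧ e.1.natAbs ≤ e.2.1 := by
  obtain ⟨x, k, b⟩ := e
  simp only [cone, mem_filter, mem_product, mem_Icc, mem_range, mem_univ, and_true]
  omega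

lemma pathEdge_mem_cone (s : ℕ → Bool) {n k : ℕ} (hk : k < n) : (pos 0 s k, 0 + k, s k) ∈ cone n :=
  mem_cone.2 ⟨by simpa using hk, by simpa using natAbs_sub_pos_le 0 s k⟩

lemma sum_cone_level {M : Type*} [AddCommMonoid M] (n : ℕ) (f : ℕ → M) :
    ∑ e ∈ cone n, f e.2.1 = ∑ k ∈ range n, (2 * (2 * k + 1)) • f k := by
  simp_rw [cone, sum_filter, sum_product, Fintype.sum_bool]
  rw [sum_comm]
  refine sum_congr rfl fun k hk => ?_
  rw [mem_range] at hk
  have hcard : #{x ∈ Icc (-(n : ℤ)) n | x.natAbs ≤ k} = 2 * k + 1 := by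
    rw [show {x ∈ Icc (-(n : ℤ)) n | x.natAbs ≤ k} = Icc (-(k : ℤ)) k by
      ext x; simp only [mem_filter, mem_Icc]; omega]
    rw [Int.card_Icc]
    omega
  simp_rw [← two_nsmul]
  rw [← smul_sum, ← sum_filter, sum_const, smul_smul, hcard]

lemma Z_eq_add_of_cone {Y Y' : ℤ × ℕ × Bool → ℝ} {n : ℕ} (g : ℕ → ℝ)
    (h : ∀ e ∈ cone n, Y' e = Y e + g e.2.1) : Z Y' n = Z Y n + ∑ k ∈ range n, g k := by
  have hpath (s : ℕ → Bool) : pathVal Y' 0 0 s n = pathVal Y 0 0 s n + ∑ k ∈ range n, g k := by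
    rw [pathVal, pathVal, ← sum_add_distrib]
    exact sum_congr rfl fun k hk => by simpa using h _ (pathEdge_mem_cone s (mem_range.1 hk))
  simp only [Z, hpath, ciSup_add (bddAbove_range_pathVal Y n)]

lemma Z_congr_of_cone {Y Y' : ℤ × ℕ × Bool → ℝ} {n : ℕ} (h : ∀ e ∈ cone n, Y' e = Y e) :
    Z Y' n = Z Y n := by
  simpa using Z_eq_add_of_cone (n := n) 0 (by simpa using h)

lemma sum_cone_sq_div_le (n : ℕ) (a : ℝ) :
    ∑ e ∈ cone n, (a / ((e.2.1 : ℝ) + 1)) ^ 2 ≤ 4 * a ^ 2 * harmonic n := by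
  have hH : (harmonic n : ℝ) = ∑ k ∈ range n, ((k : ℝ) + 1)⁻¹ := by simp [harmonic]
  rw [sum_cone_level n fun k => (a / ((k : ℝ) + 1)) ^ 2, hH, mul_sum]
  refine sum_le_sum fun k _ => ?_
  have hk : (k : ℝ) + 1 ≠ 0 := by positivity
  have hgap : 4 * a ^ 2 * ((k : ℝ) + 1)⁻¹ - 2 * (2 * k + 1) * (a / (k + 1)) ^ 2
      = 2 * a ^ 2 / (k + 1) ^ 2 := by
    field_simp
    ring
  rw [nsmul_eq_mul]
  push_cast
  linarith [hgap ▸ (by positivity : 0 ≤ 2 * a ^ 2 / ((k : ℝ) + 1) ^ 2)]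

noncomputable def extendCone {n : ℕ} (y : cone n → ℝ) : ℤ × ℕ × Bool → ℝ :=
  fun e => if h : e ∈ cone n then y ⟨e, h⟩ else 0

lemma measurable_Z_extendCone (n : ℕ) : Measurable fun y : cone n → ℝ => Z (extendCone y) n :=
  measurable_Z (fun e => by
    by_cases he : e ∈ cone n <;> simp [extendCone, he, measurable_pi_apply]) n

lemma Z_extendCone_add {n : ℕ} (y : cone n → ℝ) (g : ℕ → ℝ) :
    Z (extendCone (y + fun i => g i.1.2.1)) n = Z (extendCone y) n + ∑ k ∈ range n, g k :=
  Z_eq_add_of_cone g fun e he => by simp [extendCone, he]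

lemma measureReal_Z_le_eq_pi {Ω : Type*} [MeasurableSpace Ω] {P : Measure Ω}
    {X : ℤ × ℕ × Bool → Ω → ℝ} (hmeas : ∀ e, Measurable (X e)) (hindep : iIndepFun X P)
    (hdist : ∀ e, P.map (X e) = gaussianReal 0 1) (n : ℕ) (t : ℝ) :
    P.real {ω | Z (fun e => X e ω) n ≤ t}
      = (Measure.pi fun _ : cone n => gaussianReal 0 1).real {y | Z (extendCone y) n ≤ t} := by
  let φ : Ω → cone n → ℝ := fun ω i => X i ω
  have hZ (ω : Ω) : Z (extendCone (φ ω)) n = Z (fun e => X e ω) n :=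
    Z_congr_of_cone fun e he => by simp [extendCone, φ, he]
  have hlaw : P.map φ = Measure.pi fun _ : cone n => gaussianReal 0 1 :=
    map_restrict_eq_pi hmeas hindep hdist (cone n)
  have hφ : Measurable φ := measurable_pi_lambda _ fun i => hmeas i
  rw [← hlaw, map_measureReal_apply hφ
    (measurableSet_le (measurable_Z_extendCone n) measurable_const)]
  congr 1
  ext ω
  show _ ≤ t ↔ Z (extendCone (φ ω)) n ≤ t
  rw [hZ]

theorem exp_mul_sub_half_le_measureReal_Z_le_sub {Ω : Type*} [MeasurableSpace Ω]
    {P : Measure Ω} {X : ℤ × ℕ × Bool → Ω → ℝ}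
    (hmeas : ∀ e, Measurable (X e)) (hindep : iIndepFun X P)
    (hdist : ∀ e, P.map (X e) = gaussianReal 0 1) {n : ℕ} (hn : 0 < n) (t D : ℝ) :
    Real.exp (-(2 * D ^ 2 / harmonic n)) * (P.real {ω | Z (fun e => X e ω) n ≤ t} - 1 / 2)
      ≤ P.real {ω | Z (fun e => X e ω) n ≤ t - D} := by
  set H : ℝ := (harmonic n : ℝ)
  have hH : 0 < H := by simpa [H] using harmonic_pos hn.ne'
  set a := D / H
  set w : cone n → ℝ := fun i => a / ((i.1.2.1 : ℝ) + 1)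
  set π := Measure.pi fun _ : cone n => gaussianReal 0 1
  set A := {y : cone n → ℝ | Z (extendCone y) n ≤ t}
  have hshift (y : cone n → ℝ) : Z (extendCone (y + w)) n = Z (extendCone y) n + D := by
    have hHsum : H = ∑ k ∈ range n, ((k : ℝ) + 1)⁻¹ := by simp [H, harmonic]
    rw [Z_extendCone_add y fun k => a / ((k : ℝ) + 1)]
    simp_rw [div_eq_mul_inv, ← mul_sum, ← hHsum, a, div_mul_cancel₀ D hH.ne']
  have hV : ∑ i, w i ^ 2 ≤ 4 * D ^ 2 / H :=
    calc ∑ i, w i ^ 2 = ∑ e ∈ cone n, (a / ((e.2.1 : ℝ) + 1)) ^ 2 :=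
          sum_coe_sort (cone n) fun e => (a / ((e.2.1 : ℝ) + 1)) ^ 2
      _ ≤ 4 * a ^ 2 * H := sum_cone_sq_div_le n a
      _ = 4 * D ^ 2 / H := by simp only [a]; field_simp
  rw [measureReal_Z_le_eq_pi hmeas hindep hdist, measureReal_Z_le_eq_pi hmeas hindep hdist]
  rcases lt_or_ge (π.real A) (1 / 2) with hsmall | hlarge
  · exact (mul_nonpos_of_nonneg_of_nonpos (Real.exp_pos _).le (by linarith)).trans
      measureReal_nonneg
  calc Real.exp (-(2 * D ^ 2 / H)) * (π.real A - 1 / 2)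
      ≤ Real.exp (-(∑ i, w i ^ 2) / 2) * (π.real A - 1 / 2) := by
        gcongr
        linarith [show 4 * D ^ 2 / H = 2 * (2 * D ^ 2 / H) by ring]
    _ ≤ π.real ((· + w) ⁻¹' A) := exp_mul_sub_half_le_pi_gaussianReal_preimage_add w
        (measurableSet_le (measurable_Z_extendCone n) measurable_const)
    _ ≤ π.real {y | Z (extendCone y) n ≤ t - D} :=
        measureReal_mono fun y (hy : Z (extendCone (y + w)) n ≤ t) => by
          show Z (extendCone y) n ≤ t - D
          linarith [hshift y]

end Stmt13

/-- Proposition 3.1.  For Model 1 in dimension `d = 1` with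
i.i.d. `N(0,1)` weights: given `ε > 0`, there is `c(ε) > 0` such that for all
`N` large, `P(Z_{2^N} ≤ (μ - ε) 2^N) ≥ (1/2) e^{-c(ε) 2^{2N} / N}`. -/
theorem stmt_13
    {Ω : Type} [MeasurableSpace Ω] (P : Measure Ω) [IsProbabilityMeasure P]
    (X : ℤ × ℕ × Bool → Ω → ℝ)
    (hmeas : ∀ e, Measurable (X e))
    (hindep : iIndepFun X P)
    (hdist : ∀ e, Measure.map (X e) P = gaussianReal 0 1)
    (μ : ℝ)
    (hμ : ∀ᵐ ω ∂P, Tendsto (fun n : ℕ => Z (fun e => X e ω) n / n) atTop (nhds μ))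
    (ε : ℝ) (hε : 0 < ε) :
    ∃ c > (0 : ℝ), ∃ N₀ : ℕ, ∀ N : ℕ, N₀ ≤ N →
      (1 / 2) * Real.exp (-(c * 2 ^ (2 * N)) / N) ≤
        (P {ω | Z (fun e => X e ω) (2 ^ N) ≤ (μ - ε) * 2 ^ N}).toReal := by
  obtain ⟨N₁, hN₁⟩ := eventually_atTop.1 <| eventually_le_measureReal_le_add_mul
    (measurable_Z fun e => hmeas e) hμ hε (p := 3 / 4) (by norm_num)
  refine ⟨16 * ε ^ 2 + 1, by positivity, max N₁ 1, fun N hN => ?_⟩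
  have hlarge := hN₁ (2 ^ N) (((le_max_left _ _).trans hN).trans N.lt_two_pow_self.le)
  push_cast at hlarge
  have key := exp_mul_sub_half_le_measureReal_Z_le_sub hmeas hindep hdist (Nat.two_pow_pos N)
    ((μ + ε) * 2 ^ N) (2 * ε * 2 ^ N)
  rw [show (μ + ε) * (2 : ℝ) ^ N - 2 * ε * 2 ^ N = (μ - ε) * 2 ^ N by ring] at key
  calc 1 / 2 * Real.exp (-((16 * ε ^ 2 + 1) * 2 ^ (2 * N)) / N)
      ≤ 1 / 4 * Real.exp (-(2 * (2 * ε * 2 ^ N) ^ 2 / harmonic (2 ^ N))) :=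
        half_mul_exp_le_quarter_mul_exp ε ((le_max_right _ _).trans hN)
          (half_le_harmonic_two_pow N)
    _ ≤ _ := by nlinarith [Real.exp_pos (-(2 * (2 * ε * 2 ^ N) ^ 2 / harmonic (2 ^ N)))]
    _ ≤ _ := key
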